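/- arXiv:0906.4128 — 4 statements merged into one kernel-verified Lean document; each statement's English description precedes it below -/
import Mathlib

section
/- If (C, Δ) is a coassociative coalgebra over a commutative ring k and α : C → C is a coalgebra morphism, then C with the twisted comultiplication Δ_α = Δ ∘ α and the map α is a Hom-coassociative coalgebra; i.e., (α ⊗ α) ∘ Δ_α = Δ_α ∘ α and (α ⊗ Δ_α) ∘ Δ_α = (Δ_α ⊗ α) ∘ Δ_α. -/
/-!
Both sides of the Hom-coassociativity identity collapse to an untwisted one: since α is
comultiplicative, `(f ∘ α) ⊗ α` composed with `Δ ∘ α` equals `(f ⊗ id) ∘ Δ ∘ α²`, and likewise on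
the other side, so the identity is ordinary coassociativity precomposed with `α ∘ α`.
-/

open TensorProduct

namespace TensorProduct

variable {R C M : Type*} [CommSemiring R] [AddCommMonoid C] [Module R C] [AddCommMonoid M]
  [Module R M] {Δ : C →ₗ[R] C ⊗[R] C} {α : C →ₗ[R] C}

theorem map_comp_twist_eq_twist_comp (hα : Δ ∘ₗ α = map α α ∘ₗ Δ) :
    map α α ∘ₗ (Δ ∘ₗ α) = (Δ ∘ₗ α) ∘ₗ α := by
  rw [← LinearMap.comp_assoc, ← hα, LinearMap.comp_assoc]

theorem map_comp_left_comp_twist (hα : Δ ∘ₗ α = map α α ∘ₗ Δ) (f : C →ₗ[R] M) :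
    map (f ∘ₗ α) α ∘ₗ (Δ ∘ₗ α) = (map f LinearMap.id ∘ₗ Δ) ∘ₗ α ∘ₗ α := by
  rw [← LinearMap.rTensor_comp_map, LinearMap.comp_assoc,
    map_comp_twist_eq_twist_comp hα, LinearMap.rTensor]
  rfl

theorem map_comp_right_comp_twist (hα : Δ ∘ₗ α = map α α ∘ₗ Δ) (f : C →ₗ[R] M) :
    map α (f ∘ₗ α) ∘ₗ (Δ ∘ₗ α) = (map LinearMap.id f ∘ₗ Δ) ∘ₗ α ∘ₗ α := by
  rw [← LinearMap.lTensor_comp_map, LinearMap.comp_assoc,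
    map_comp_twist_eq_twist_comp hα, LinearMap.lTensor]
  rfl

end TensorProduct

/-- If `(C, Δ)` is a coassociative coalgebra and `α : C → C` a coalgebra
morphism, then `(C, Δ_α = Δ ∘ α, α)` is a Hom-coassociative coalgebra. -/
theorem twisted_hom_coassociative_coalgebra
    {k : Type*} [CommRing k] {C : Type*} [AddCommGroup C] [Module k C]
    (Δ : C →ₗ[k] C ⊗[k] C)
    -- coassociativity: (Δ ⊗ Id) ∘ Δ = (Id ⊗ Δ) ∘ Δ (up to the associator)
    (hcoassoc : (TensorProduct.assoc k C C C).toLinearMap ∘ₗ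
        TensorProduct.map Δ LinearMap.id ∘ₗ Δ = TensorProduct.map LinearMap.id Δ ∘ₗ Δ)
    (α : C →ₗ[k] C)
    -- α is a coalgebra morphism:
    (hα : Δ ∘ₗ α = TensorProduct.map α α ∘ₗ Δ) :
    -- Δ_α = Δ ∘ α; comultiplicativity and Hom-coassociativity:
    (TensorProduct.map α α ∘ₗ (Δ ∘ₗ α) = (Δ ∘ₗ α) ∘ₗ α) ∧
    ((TensorProduct.assoc k C C C).toLinearMap ∘ₗ
        TensorProduct.map (Δ ∘ₗ α) α ∘ₗ (Δ ∘ₗ α)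
      = TensorProduct.map α (Δ ∘ₗ α) ∘ₗ (Δ ∘ₗ α)) := by
  refine ⟨map_comp_twist_eq_twist_comp hα, ?_⟩
  rw [map_comp_left_comp_twist hα, map_comp_right_comp_twist hα, ← hcoassoc]
  rfl
end

section
/- If (A, μ, Δ) is a bialgebra (compatibility: Δ(xy) = Δ(x)Δ(y) in A ⊗ A) and α : A → A is a bialgebra morphism, then A with twisted multiplication μ_α = α ∘ μ and twisted comultiplication Δ_α = Δ ∘ α satisfies the Hom-bialgebra compatibility condition Δ_α ∘ μ_α = (μ_α ⊗ μ_α) ∘ (Id ⊗ τ ⊗ Id) ∘ (Δ_α ⊗ Δ_α), where τ is the twist isomorphism on A ⊗ A. -/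
open TensorProduct

variable {k : Type*} [CommRing k] {A : Type*} [AddCommGroup A] [Module k A]

/-- Componentwise product `(μ ⊗ μ) ∘ (Id ⊗ τ ⊗ Id)` on `A ⊗ A`, applied to `Δ x ⊗ Δ y`:
`mulT2 μ (a ⊗ b) (c ⊗ d) = μ a c ⊗ μ b d`. -/
noncomputable def mulT2 (μ : A →ₗ[k] A →ₗ[k] A) (X Y : A ⊗[k] A) : A ⊗[k] A :=
  ((TensorProduct.map (TensorProduct.lift μ) (TensorProduct.lift μ)) ∘ₗ
    (TensorProduct.tensorTensorTensorComm k A A A A).toLinearMap) (X ⊗ₜ[k] Y)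

theorem map_mulT2 (μ : A →ₗ[k] A →ₗ[k] A) (α : A →ₗ[k] A) (X Y : A ⊗[k] A) :
    TensorProduct.map α α (mulT2 μ X Y) = mulT2 (μ.compr₂ α) X Y := by
  simp only [mulT2, ← LinearMap.comp_apply, ← LinearMap.comp_assoc, ← TensorProduct.map_comp,
    TensorProduct.lift_compr₂]

theorem twisted_hom_bialgebra_compatibility_general
    (μ : A →ₗ[k] A →ₗ[k] A) (Δ : A →ₗ[k] A ⊗[k] A)
    -- bialgebra compatibility Δ(xy) = Δ(x)Δ(y):
    (hcompat : ∀ x y : A, Δ (μ x y) = mulT2 μ (Δ x) (Δ y))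
    (α : A →ₗ[k] A)
    (hαμ : ∀ x y : A, α (μ x y) = μ (α x) (α y))
    (hαΔ : Δ ∘ₗ α = TensorProduct.map α α ∘ₗ Δ) :
    ∀ x y : A, (Δ ∘ₗ α) (α (μ x y))
      = mulT2 (μ.compr₂ α) ((Δ ∘ₗ α) x) ((Δ ∘ₗ α) y) := by
  intro x y
  have hΔα (z : A) : Δ (α z) = TensorProduct.map α α (Δ z) := LinearMap.congr_fun hαΔ z
  simp only [LinearMap.comp_apply]
  rw [hαμ, hΔα, hcompat, map_mulT2]

/-- If `(A, μ, Δ)` is a bialgebra and `α` a bialgebra morphism, then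
`μ_α = α ∘ μ` and `Δ_α = Δ ∘ α` satisfy the Hom-bialgebra compatibility condition
`Δ_α ∘ μ_α = (μ_α ⊗ μ_α) ∘ (Id ⊗ τ ⊗ Id) ∘ (Δ_α ⊗ Δ_α)`. -/
theorem twisted_hom_bialgebra_compatibility
    (μ : A →ₗ[k] A →ₗ[k] A) (Δ : A →ₗ[k] A ⊗[k] A)
    (hassoc : ∀ x y z : A, μ (μ x y) z = μ x (μ y z))
    (hcoassoc : (TensorProduct.assoc k A A A).toLinearMap ∘ₗ
        TensorProduct.map Δ LinearMap.id ∘ₗ Δ = TensorProduct.map LinearMap.id Δ ∘ₗ Δ)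
    -- bialgebra compatibility Δ(xy) = Δ(x)Δ(y):
    (hcompat : ∀ x y : A, Δ (μ x y) = mulT2 μ (Δ x) (Δ y))
    (α : A →ₗ[k] A)
    (hαμ : ∀ x y : A, α (μ x y) = μ (α x) (α y))
    (hαΔ : Δ ∘ₗ α = TensorProduct.map α α ∘ₗ Δ) :
    ∀ x y : A, (Δ ∘ₗ α) (α (μ x y))
      = mulT2 (μ.compr₂ α) ((Δ ∘ₗ α) x) ((Δ ∘ₗ α) y) :=
  twisted_hom_bialgebra_compatibility_general μ Δ hcompat α hαμ hαΔ
end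

section
/- Let (A, μ, Δ, α, c, R) be a quasi-triangular Hom-bialgebra. Then R satisfies the quantum Hom-Yang-Baxter equation (R₁₂ R₁₃) R₂₃ = R₂₃ (R₁₃ R₁₂) in A ⊗ A ⊗ A, where R₁₂ = R ⊗ c, R₂₃ = c ⊗ R, R₁₃ = (τ ⊗ Id)(R₂₃), and products in A ⊗ A ⊗ A are taken componentwise using μ. -/
open TensorProduct

variable {k : Type*} [CommRing k] {A : Type*} [AddCommGroup A] [Module k A]

/-- Componentwise product on `(A ⊗ A) ⊗ A` induced by `μ`. -/
noncomputable def mulT3 (μ : A →ₗ[k] A →ₗ[k] A) (X Y : (A ⊗[k] A) ⊗[k] A) :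
    (A ⊗[k] A) ⊗[k] A :=
  ((TensorProduct.map
      ((TensorProduct.map (TensorProduct.lift μ) (TensorProduct.lift μ)) ∘ₗ
        (TensorProduct.tensorTensorTensorComm k A A A A).toLinearMap)
      (TensorProduct.lift μ)) ∘ₗ
    (TensorProduct.tensorTensorTensorComm k (A ⊗[k] A) A (A ⊗[k] A) A).toLinearMap)
    (X ⊗ₜ[k] Y)

/-- `R₁₂ = R ⊗ c`. -/
noncomputable def R12e (c : A) (R : A ⊗[k] A) : (A ⊗[k] A) ⊗[k] A := R ⊗ₜ[k] c

/-- `R₂₃ = c ⊗ R`. -/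
noncomputable def R23e (c : A) (R : A ⊗[k] A) : (A ⊗[k] A) ⊗[k] A :=
  (TensorProduct.assoc k A A A).symm (c ⊗ₜ[k] R)

/-- `R₁₃ = (τ ⊗ Id)(R₂₃)`. -/
noncomputable def R13e (c : A) (R : A ⊗[k] A) : (A ⊗[k] A) ⊗[k] A :=
  TensorProduct.map (TensorProduct.comm k A A).toLinearMap LinearMap.id (R23e c R)

/-! Swapping the last two tensor factors is multiplicative and exchanges `R₁₂` and `R₁₃`, so
`R₁₂R₁₃` is the swap of `R₁₃R₁₂ = (α ⊗ Δ)(R)`, namely `(α ⊗ τΔ)(R)`. On a summand `α a ⊗ τΔ b`,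
right multiplication by `R₂₃ = c ⊗ R` gives `α a · c ⊗ τΔ(b) R`, and left multiplication of
`α a ⊗ Δ b` by `R₂₃` gives `c · α a ⊗ R Δ(b)`; these agree by the weak unit axioms and
`τΔ(b) R = R Δ(b)`. Hence `(R₁₂R₁₃)R₂₃ = R₂₃ (α ⊗ Δ)(R) = R₂₃ (R₁₃R₁₂)`. -/

section

variable (μ : A →ₗ[k] A →ₗ[k] A)

@[simp] lemma mulT2_tmul (a b x y : A) :
    mulT2 μ (a ⊗ₜ[k] b) (x ⊗ₜ[k] y) = μ a x ⊗ₜ[k] μ b y := by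
  simp [mulT2]

@[simp] lemma mulT3_tmul (a b e x y f : A) :
    mulT3 μ ((a ⊗ₜ[k] b) ⊗ₜ[k] e) ((x ⊗ₜ[k] y) ⊗ₜ[k] f)
      = (μ a x ⊗ₜ[k] μ b y) ⊗ₜ[k] μ e f := by
  simp [mulT3]

lemma mulT2_add_left (X X' Y : A ⊗[k] A) :
    mulT2 μ (X + X') Y = mulT2 μ X Y + mulT2 μ X' Y := by
  simp [mulT2, add_tmul]

lemma mulT2_add_right (X Y Y' : A ⊗[k] A) :
    mulT2 μ X (Y + Y') = mulT2 μ X Y + mulT2 μ X Y' := by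
  simp [mulT2, tmul_add]

lemma mulT3_add_left (X X' Y : (A ⊗[k] A) ⊗[k] A) :
    mulT3 μ (X + X') Y = mulT3 μ X Y + mulT3 μ X' Y := by
  simp [mulT3, add_tmul]

lemma mulT3_add_right (X Y Y' : (A ⊗[k] A) ⊗[k] A) :
    mulT3 μ X (Y + Y') = mulT3 μ X Y + mulT3 μ X Y' := by
  simp [mulT3, tmul_add]

lemma mulT3_assoc_symm_tmul (a b : A) (X Y : A ⊗[k] A) :
    mulT3 μ ((TensorProduct.assoc k A A A).symm (a ⊗ₜ X))
        ((TensorProduct.assoc k A A A).symm (b ⊗ₜ Y))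
      = (TensorProduct.assoc k A A A).symm (μ a b ⊗ₜ mulT2 μ X Y) := by
  induction X using TensorProduct.induction_on with
  | zero => simp [mulT3, mulT2]
  | add X X' hX hX' => simp only [tmul_add, map_add, mulT3_add_left, mulT2_add_left, hX, hX']
  | tmul x y =>
    induction Y using TensorProduct.induction_on with
    | zero => simp [mulT3, mulT2]
    | add Y Y' hY hY' => simp only [tmul_add, map_add, mulT3_add_right, mulT2_add_right, hY, hY']
    | tmul u v => simp

lemma rightComm_mulT3 (X Y : (A ⊗[k] A) ⊗[k] A) :
    rightComm k A A A (mulT3 μ X Y) = mulT3 μ (rightComm k A A A X) (rightComm k A A A Y) := by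
  unfold mulT3
  rw [← LinearEquiv.coe_coe, ← LinearMap.comp_apply, ← map_tmul, ← LinearMap.comp_apply]
  congr 1
  ext
  simp

end

lemma rightComm_R12e (c : A) (R : A ⊗[k] A) : rightComm k A A A (R12e c R) = R13e c R := by
  induction R using TensorProduct.induction_on with
  | zero => simp [R12e, R13e, R23e]
  | tmul a b => simp [R12e, R13e, R23e]
  | add X Y hX hY => simp_all [R12e, R13e, R23e, add_tmul, tmul_add]

lemma rightComm_R13e (c : A) (R : A ⊗[k] A) : rightComm k A A A (R13e c R) = R12e c R := by
  rw [← rightComm_R12e]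
  exact (rightComm k A A A).symm_apply_apply _

lemma mulT3_R12e_R13e (μ : A →ₗ[k] A →ₗ[k] A) (c : A) (X Y : A ⊗[k] A) :
    mulT3 μ (R12e c X) (R13e c Y) = rightComm k A A A (mulT3 μ (R13e c X) (R12e c Y)) := by
  rw [rightComm_mulT3, rightComm_R13e, rightComm_R12e]

lemma rightComm_assoc_symm_map (f : A →ₗ[k] A) (g : A →ₗ[k] A ⊗[k] A) (Z : A ⊗[k] A) :
    rightComm k A A A ((TensorProduct.assoc k A A A).symm (map f g Z))
      = (TensorProduct.assoc k A A A).symm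
          (map f ((TensorProduct.comm k A A).toLinearMap ∘ₗ g) Z) := by
  rw [rightComm_def]
  simp only [LinearEquiv.trans_apply, LinearEquiv.apply_symm_apply]
  congr 1
  rw [← LinearEquiv.coe_toLinearMap, toLinearMap_congr, ← LinearMap.comp_apply, ← map_comp]
  rfl

lemma mulT3_assoc_symm_map_comm_comp_R23e (μ : A →ₗ[k] A →ₗ[k] A) (Δ : A →ₗ[k] A ⊗[k] A)
    (α : A →ₗ[k] A) (c : A) (R : A ⊗[k] A)
    (hcl : ∀ x : A, μ c x = α x) (hcr : ∀ x : A, μ x c = α x)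
    (hR3 : ∀ x : A, mulT2 μ ((TensorProduct.comm k A A) (Δ x)) R = mulT2 μ R (Δ x))
    (Z : A ⊗[k] A) :
    mulT3 μ ((TensorProduct.assoc k A A A).symm
        (map α ((TensorProduct.comm k A A).toLinearMap ∘ₗ Δ) Z)) (R23e c R)
      = mulT3 μ (R23e c R) ((TensorProduct.assoc k A A A).symm (map α Δ Z)) := by
  induction Z using TensorProduct.induction_on with
  | zero => simp [mulT3]
  | add Z Z' hZ hZ' => simp only [map_add, mulT3_add_left, mulT3_add_right, hZ, hZ']
  | tmul x y =>
    simp only [R23e, map_tmul, LinearMap.comp_apply, LinearEquiv.coe_coe, mulT3_assoc_symm_tmul,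
      hcl, hcr, hR3]

theorem quantum_hom_yang_baxter_first_general
    (μ : A →ₗ[k] A →ₗ[k] A) (Δ : A →ₗ[k] A ⊗[k] A) (α : A →ₗ[k] A) (c : A) (R : A ⊗[k] A)
    -- weak unit:
    (hcl : ∀ x : A, μ c x = α x) (hcr : ∀ x : A, μ x c = α x)
    -- quasi-triangularity axioms:
    (hR2 : (TensorProduct.assoc k A A A).symm (TensorProduct.map α Δ R)
      = mulT3 μ (R13e c R) (R12e c R))
    (hR3 : ∀ x : A, mulT2 μ ((TensorProduct.comm k A A) (Δ x)) R = mulT2 μ R (Δ x)) :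
    mulT3 μ (mulT3 μ (R12e c R) (R13e c R)) (R23e c R)
      = mulT3 μ (R23e c R) (mulT3 μ (R13e c R) (R12e c R)) := by
  rw [mulT3_R12e_R13e, ← hR2, rightComm_assoc_symm_map,
    mulT3_assoc_symm_map_comm_comp_R23e μ Δ α c R hcl hcr hR3]

/-- In a quasi-triangular Hom-bialgebra `(A, μ, Δ, α, c, R)`, the element `R`
satisfies the quantum Hom-Yang-Baxter equation `(R₁₂ R₁₃) R₂₃ = R₂₃ (R₁₃ R₁₂)`. -/
theorem quantum_hom_yang_baxter_first
    (μ : A →ₗ[k] A →ₗ[k] A) (Δ : A →ₗ[k] A ⊗[k] A) (α : A →ₗ[k] A) (c : A) (R : A ⊗[k] A)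
    -- Hom-associative algebra:
    (hαμ : ∀ x y : A, α (μ x y) = μ (α x) (α y))
    (hassoc : ∀ x y z : A, μ (μ x y) (α z) = μ (α x) (μ y z))
    -- Hom-coassociative coalgebra:
    (hαΔ : Δ ∘ₗ α = TensorProduct.map α α ∘ₗ Δ)
    (hcoassoc : (TensorProduct.assoc k A A A).toLinearMap ∘ₗ TensorProduct.map Δ α ∘ₗ Δ
      = TensorProduct.map α Δ ∘ₗ Δ)
    -- Hom-bialgebra compatibility:
    (hcompat : ∀ x y : A, Δ (μ x y) = mulT2 μ (Δ x) (Δ y))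
    -- weak unit:
    (hcl : ∀ x : A, μ c x = α x) (hcr : ∀ x : A, μ x c = α x)
    -- quasi-triangularity axioms:
    (hR1 : TensorProduct.map Δ α R = mulT3 μ (R13e c R) (R23e c R))
    (hR2 : (TensorProduct.assoc k A A A).symm (TensorProduct.map α Δ R)
      = mulT3 μ (R13e c R) (R12e c R))
    (hR3 : ∀ x : A, mulT2 μ ((TensorProduct.comm k A A) (Δ x)) R = mulT2 μ R (Δ x)) :
    mulT3 μ (mulT3 μ (R12e c R) (R13e c R)) (R23e c R)
      = mulT3 μ (R23e c R) (mulT3 μ (R13e c R) (R12e c R)) :=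
  quantum_hom_yang_baxter_first_general μ Δ α c R hcl hcr hR2 hR3
end

section
/- Let V be a free module of rank 2 over a commutative ring k with basis {v₀, v₁}, let q be an invertible element of k with square root q^{1/2}, and let γ be an invertible element of k. Define α : V → V by α(vᵢ) = γ^{-i} vᵢ and B_α : V ⊗ V → V ⊗ V by the matrix (with respect to the basis {v₀⊗v₀, v₀⊗v₁, v₁⊗v₀, v₁⊗v₁}): B_α(v₀⊗v₀) = q^{1/2} v₀⊗v₀, B_α(v₀⊗v₁) = γ^{-1} q^{-1/2} v₁⊗v₀, B_α(v₁⊗v₀) = γ^{-1} q^{-1/2} v₀⊗v₁ + γ^{-1} q^{-1/2}(q - q^{-1}) v₁⊗v₀, B_α(v₁⊗v₁) = γ^{-2} q^{1/2} v₁⊗v₁. Then B_α commutes with α ⊗ α and satisfies the Hom-Yang-Baxter equation (α ⊗ B_α)(B_α ⊗ α)(α ⊗ B_α) = (B_α ⊗ α)(α ⊗ B_α)(B_α ⊗ α) on V ⊗ V ⊗ V. -/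
open TensorProduct

/-! On the basis `b i ⊗ b j`, `B = (α ⊗ α) ∘ Ř` with `Ř = sixVertex b s s⁻¹ (s⁻¹ (q - q⁻¹))`,
the braided R-matrix of `U_q(sl₂)` on its two-dimensional module (`B` itself when `γ = 1`).
`Ř` satisfies the braid relation because its entries satisfy `a² = a c + e²`, and it commutes
with `α ⊗ α` because `α` is diagonal and `Ř` preserves the weight `i + j`. Yau's twisting
principle then applies: `α ⊗ B = (α ⊗ α ⊗ α)(1 ⊗ Ř)` and `B ⊗ α = (α ⊗ α ⊗ α)(Ř ⊗ 1)`, where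
`α ⊗ α ⊗ α` commutes with both factors, so the braid relation for `Ř` becomes the
Hom-Yang-Baxter equation for `B`. -/

section Monoid

variable {G : Type*} [Monoid G]

theorem braid_mul_of_commute {a x y : G} (hx : Commute a x) (hy : Commute a y)
    (h : x * y * x = y * x * y) : a * x * (a * y) * (a * x) = a * y * (a * x) * (a * y) := by
  calc a * x * (a * y) * (a * x) = a * a * a * (x * y * x) := by
        simp only [mul_assoc, hx.symm.left_comm, hy.symm.left_comm]
    _ = a * a * a * (y * x * y) := by rw [h]
    _ = a * y * (a * x) * (a * y) := by
        simp only [mul_assoc, hx.symm.left_comm, hy.symm.left_comm]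

end Monoid

namespace HomYangBaxter

variable {R M : Type*} [CommSemiring R] [AddCommMonoid M] [Module R M]

def mapAssoc (f : M →ₗ[R] M) (g : M ⊗[R] M →ₗ[R] M ⊗[R] M) :
    M ⊗[R] M ⊗[R] M →ₗ[R] M ⊗[R] M ⊗[R] M :=
  (TensorProduct.assoc R M M M).symm.toLinearMap ∘ₗ map f g ∘ₗ
    (TensorProduct.assoc R M M M).toLinearMap

theorem mapAssoc_mul (f f' : Module.End R M) (g g' : Module.End R (M ⊗[R] M)) :
    mapAssoc (f * f') (g * g') = mapAssoc f g * mapAssoc f' g' := by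
  ext x y z
  simp [mapAssoc]

theorem mapAssoc_map (f g h : Module.End R M) : mapAssoc f (map g h) = map (map f g) h := by
  ext x y z
  simp [mapAssoc]

def IsHomYangBaxter (α : M →ₗ[R] M) (B : M ⊗[R] M →ₗ[R] M ⊗[R] M) : Prop :=
  mapAssoc α B ∘ₗ map B α ∘ₗ mapAssoc α B = map B α ∘ₗ mapAssoc α B ∘ₗ map B α

def IsYangBaxter (B : M ⊗[R] M →ₗ[R] M ⊗[R] M) : Prop :=
  IsHomYangBaxter LinearMap.id B

theorem IsYangBaxter.isHomYangBaxter_comp {Ř : Module.End R (M ⊗[R] M)}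
    (hR : IsYangBaxter Ř)
    {α : Module.End R M} (hα : Commute (map α α) Ř) : IsHomYangBaxter α (map α α * Ř) := by
  set A := map (map α α) α
  have hA : mapAssoc α (map α α) = A := mapAssoc_map α α α
  have h12 : map (map α α * Ř) α = A * map Ř 1 := by
    rw [← TensorProduct.map_mul, mul_one]
  have h23 : mapAssoc α (map α α * Ř) = A * mapAssoc 1 Ř := by
    rw [← hA, ← mapAssoc_mul, mul_one]
  have hc12 : Commute A (map Ř 1) := by
    rw [Commute, SemiconjBy, ← TensorProduct.map_mul, ← TensorProduct.map_mul, hα.eq, mul_one,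
      one_mul]
  have hc23 : Commute A (mapAssoc 1 Ř) := by
    rw [Commute, SemiconjBy, ← hA, ← mapAssoc_mul, ← mapAssoc_mul, hα.eq, mul_one, one_mul]
  have := braid_mul_of_commute hc23 hc12 hR
  unfold IsHomYangBaxter
  rw [h12, h23]
  simpa only [mul_assoc, Module.End.mul_eq_comp, LinearMap.comp_assoc] using this

noncomputable def sixVertex (b : Module.Basis (Fin 2) R M) (a e c : R) :
    Module.End R (M ⊗[R] M) :=
  (b.tensorProduct b).constr R fun p =>
    ![![a • (b 0 ⊗ₜ b 0), e • (b 1 ⊗ₜ b 0)],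
      ![e • (b 0 ⊗ₜ b 1) + c • (b 1 ⊗ₜ b 0), a • (b 1 ⊗ₜ b 1)]] p.1 p.2

variable (b : Module.Basis (Fin 2) R M) (a e c : R)

@[simp]
theorem sixVertex_apply (i j : Fin 2) :
    sixVertex b a e c (b i ⊗ₜ b j) =
      ![![a • (b 0 ⊗ₜ b 0), e • (b 1 ⊗ₜ b 0)],
        ![e • (b 0 ⊗ₜ b 1) + c • (b 1 ⊗ₜ b 0), a • (b 1 ⊗ₜ b 1)]] i j := by
  rw [sixVertex, ← Module.Basis.tensorProduct_apply b b i j, Module.Basis.constr_basis]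

theorem commute_map_sixVertex {α : M →ₗ[R] M} {x y : R} (h0 : α (b 0) = x • b 0)
    (h1 : α (b 1) = y • b 1) : Commute (map α α) (sixVertex b a e c) := by
  refine (b.tensorProduct b).ext fun ⟨i, j⟩ => ?_
  fin_cases i <;> fin_cases j <;>
    simp only [Module.Basis.tensorProduct_apply, Module.End.mul_apply, map_tmul, h0, h1,
      ← smul_tmul', tmul_smul, map_smul, map_add, sixVertex_apply, Fin.zero_eta, Fin.mk_one,
      Matrix.cons_val_zero, Matrix.cons_val_one, smul_smul] <;>
    module

theorem sixVertex_isYangBaxter (h : a * a = a * c + e * e) :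
    IsYangBaxter (sixVertex b a e c) := by
  -- the only coefficient identity of the braid relation that is not a ring identity
  have key : a * c * a = e * c * e + c * a * c :=
    calc a * c * a = c * (a * a) := by ring
      _ = c * (a * c + e * e) := by rw [h]
      _ = e * c * e + c * a * c := by ring
  unfold IsYangBaxter IsHomYangBaxter
  refine ((b.tensorProduct b).tensorProduct b).ext fun ⟨⟨i, j⟩, l⟩ => ?_
  fin_cases i <;> fin_cases j <;> fin_cases l <;>
    simp only [mapAssoc, Module.Basis.tensorProduct_apply, LinearMap.comp_apply,
      LinearEquiv.coe_coe, assoc_tmul, assoc_symm_tmul, LinearMap.id_apply, ← smul_tmul',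
      tmul_smul, map_tmul, map_smul, map_add, sixVertex_apply, Fin.zero_eta, Fin.mk_one,
      Matrix.cons_val_zero, Matrix.cons_val_one, add_tmul, tmul_add, smul_smul] <;>
    match_scalars
  all_goals first | ring1 | (convert key using 1 <;> ring1) | (convert key.symm using 1 <;> ring1)

end HomYangBaxter

open HomYangBaxter

/-- On a free module `V` of rank 2 with basis `{v₀, v₁}`, with `q` invertible
with square root `q^{1/2} = s` and `γ` invertible, the maps `α(vᵢ) = γ^{-i} vᵢ` and `B_α`
given by the matrix
`B_α(v₀⊗v₀) = q^{1/2} v₀⊗v₀`, `B_α(v₀⊗v₁) = γ⁻¹ q^{-1/2} v₁⊗v₀`,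
`B_α(v₁⊗v₀) = γ⁻¹ q^{-1/2} v₀⊗v₁ + γ⁻¹ q^{-1/2}(q - q⁻¹) v₁⊗v₀`,
`B_α(v₁⊗v₁) = γ⁻² q^{1/2} v₁⊗v₁`
commute and satisfy the Hom-Yang-Baxter equation on `V ⊗ V ⊗ V`. -/
theorem Uhsl2_module_hybe_solution
    {k : Type*} [CommRing k] {V : Type*} [AddCommGroup V] [Module k V]
    (b : Module.Basis (Fin 2) k V)
    (q s γ : kˣ) (hs : (s : k) * (s : k) = (q : k))
    (α : V →ₗ[k] V)
    (hα0 : α (b 0) = b 0)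
    (hα1 : α (b 1) = (γ⁻¹ : kˣ) • b 1)
    (B : V ⊗[k] V →ₗ[k] V ⊗[k] V)
    (hB00 : B (b 0 ⊗ₜ[k] b 0) = (s : k) • (b 0 ⊗ₜ[k] b 0))
    (hB01 : B (b 0 ⊗ₜ[k] b 1) = ((γ⁻¹ : kˣ) * (s⁻¹ : kˣ) : k) • (b 1 ⊗ₜ[k] b 0))
    (hB10 : B (b 1 ⊗ₜ[k] b 0)
      = ((γ⁻¹ : kˣ) * (s⁻¹ : kˣ) : k) • (b 0 ⊗ₜ[k] b 1)
        + ((γ⁻¹ : kˣ) * (s⁻¹ : kˣ) * ((q : k) - (q⁻¹ : kˣ)) : k) • (b 1 ⊗ₜ[k] b 0))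
    (hB11 : B (b 1 ⊗ₜ[k] b 1)
      = ((γ⁻¹ : kˣ) * (γ⁻¹ : kˣ) * (s : kˣ) : k) • (b 1 ⊗ₜ[k] b 1)) :
    -- B commutes with α ⊗ α:
    (TensorProduct.map α α ∘ₗ B = B ∘ₗ TensorProduct.map α α) ∧
    -- the Hom-Yang-Baxter equation (α ⊗ B)(B ⊗ α)(α ⊗ B) = (B ⊗ α)(α ⊗ B)(B ⊗ α)
    -- as operators on (V ⊗ V) ⊗ V:
    (((TensorProduct.assoc k V V V).symm.toLinearMap ∘ₗ
          TensorProduct.map α B ∘ₗ (TensorProduct.assoc k V V V).toLinearMap) ∘ₗ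
        TensorProduct.map B α ∘ₗ
        ((TensorProduct.assoc k V V V).symm.toLinearMap ∘ₗ
          TensorProduct.map α B ∘ₗ (TensorProduct.assoc k V V V).toLinearMap)
      = TensorProduct.map B α ∘ₗ
        ((TensorProduct.assoc k V V V).symm.toLinearMap ∘ₗ
          TensorProduct.map α B ∘ₗ (TensorProduct.assoc k V V V).toLinearMap) ∘ₗ
        TensorProduct.map B α) := by
  set Ř := sixVertex b (s : k) (s⁻¹ : kˣ) ((s⁻¹ : kˣ) * ((q : k) - (q⁻¹ : kˣ)))
  have hsi : (s : k) * (s⁻¹ : kˣ) = 1 := by exact_mod_cast s.mul_inv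
  have hqi : ((q⁻¹ : kˣ) : k) = (s⁻¹ : kˣ) * (s⁻¹ : kˣ) := by
    rw [← (Units.ext hs : s * s = q), mul_inv_rev, Units.val_mul]
  have hŘ : Commute (map α α) Ř := commute_map_sixVertex b _ _ _ (x := 1)
    (by rw [hα0, one_smul]) (by rw [hα1, Units.smul_def])
  have hB : B = map α α * Ř := by
    refine (b.tensorProduct b).ext fun ⟨i, j⟩ => ?_
    fin_cases i <;> fin_cases j <;>
      simp only [Module.Basis.tensorProduct_apply, Module.End.mul_apply, map_tmul, hα0, hα1,
        hB00, hB01, hB10, hB11, Units.smul_def,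
        ← smul_tmul', tmul_smul, map_smul, map_add, sixVertex_apply, Fin.zero_eta, Fin.mk_one,
        Matrix.cons_val_zero, Matrix.cons_val_one, smul_smul, Ř] <;>
      module
  have hYB : IsYangBaxter Ř := sixVertex_isYangBaxter b _ _ _ (by
    rw [hqi, ← hs]; linear_combination ((s⁻¹ : kˣ) * (s⁻¹ : kˣ) - (s : k) * s) * hsi)
  subst hB
  exact ⟨(Commute.refl _).mul_right hŘ, hYB.isHomYangBaxter_comp hŘ⟩
end
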